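/- arXiv:2106.04227 — 5 statements merged into one kernel-verified Lean document; each statement's English description precedes it below -/
import Mathlib

section
/- For every quaternion q, μ(q)² + ν(q)²·q = 1. -/
open Quaternion

noncomputable def mu (q : ℍ[ℝ]) : ℍ[ℝ] :=
  ∑' m : ℕ, ((-1 : ℝ) ^ m / ((2 * m).factorial : ℝ)) • q ^ m

noncomputable def nu (q : ℍ[ℝ]) : ℍ[ℝ] :=
  ∑' m : ℕ, ((-1 : ℝ) ^ m / ((2 * m + 1).factorial : ℝ)) • q ^ m

/-!
Morally `μ(q) = cos √q` and `ν(q) = sin √q / √q`, so the identity is `cos² + sin² = 1`.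
Concretely, both squares are Cauchy products of absolutely convergent series in powers of `q`,
and the coefficient of `q ^ (n + 1)` in `μ² + ν² q` is, up to the sign `(-1) ^ (n + 1)`, the sum
`∑ k ≤ 2n + 2, (-1) ^ k / (k! (2n + 2 - k)!) = (1 - 1) ^ (2n + 2) / (2n + 2)! = 0`, split into
its even and odd `k`.
-/

open Finset

theorem Finset.sum_range_two_mul_add_one {M : Type*} [AddCommMonoid M] (f : ℕ → M) (n : ℕ) :
    ∑ k ∈ range (2 * n + 1), f k
      = ∑ k ∈ range (n + 1), f (2 * k) + ∑ k ∈ range n, f (2 * k + 1) := by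
  induction n with
  | zero => simp
  | succ n ih =>
    rw [show 2 * (n + 1) + 1 = 2 * n + 1 + 1 + 1 by ring, sum_range_succ f (2 * n + 1 + 1),
      sum_range_succ f (2 * n + 1), ih, sum_range_succ (fun k => f (2 * k)) (n + 1),
      sum_range_succ (fun k => f (2 * k + 1)) n, show 2 * (n + 1) = 2 * n + 1 + 1 by ring]
    abel

theorem sum_range_neg_one_pow_div_factorial_mul_factorial {K : Type*} [Field K] [CharZero K]
    {n : ℕ} (hn : n ≠ 0) :
    ∑ k ∈ range (n + 1), (-1 : K) ^ k / (k.factorial * (n - k).factorial) = 0 := by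
  have hchoose : ∀ k ∈ range (n + 1),
      (-1 : K) ^ k / (k.factorial * (n - k).factorial) = (-1) ^ k * n.choose k / n.factorial := by
    intro k hk
    rw [Nat.cast_choose K (Nat.lt_succ_iff.mp (mem_range.mp hk))]
    have : (n.factorial : K) ≠ 0 := Nat.cast_ne_zero.mpr n.factorial_ne_zero
    field_simp
  rw [sum_congr rfl hchoose, ← sum_div, div_eq_zero_iff]
  exact Or.inl (mod_cast Int.alternating_sum_range_choose_of_ne hn)

noncomputable def muCoeff (m : ℕ) : ℝ := (-1) ^ m / (2 * m).factorial

noncomputable def nuCoeff (m : ℕ) : ℝ := (-1) ^ m / (2 * m + 1).factorial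

theorem sum_antidiagonal_muCoeff_add_sum_antidiagonal_nuCoeff (n : ℕ) :
    ∑ kl ∈ antidiagonal (n + 1), muCoeff kl.1 * muCoeff kl.2
      + ∑ kl ∈ antidiagonal n, nuCoeff kl.1 * nuCoeff kl.2 = 0 := by
  have hsum := sum_range_neg_one_pow_div_factorial_mul_factorial (K := ℝ) (n := 2 * n + 2)
    (by omega)
  rw [show 2 * n + 2 + 1 = 2 * (n + 1) + 1 by ring, sum_range_two_mul_add_one] at hsum
  have heven : ∀ k ∈ range (n + 1 + 1),
      (-1 : ℝ) ^ (2 * k) / ((2 * k).factorial * (2 * n + 2 - 2 * k).factorial)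
        = (-1) ^ (n + 1) * (muCoeff k * muCoeff (n + 1 - k)) := by
    intro k hk
    have hk : k ≤ n + 1 := Nat.lt_succ_iff.mp (mem_range.mp hk)
    rw [show 2 * n + 2 - 2 * k = 2 * (n + 1 - k) by omega, muCoeff, muCoeff, pow_mul]
    field_simp
    rw [← pow_add, ← pow_add, show n + 1 + k + (n + 1 - k) = 2 * (n + 1) by omega, pow_mul]
    norm_num
  have hodd : ∀ k ∈ range (n + 1),
      (-1 : ℝ) ^ (2 * k + 1) / ((2 * k + 1).factorial * (2 * n + 2 - (2 * k + 1)).factorial)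
        = (-1) ^ (n + 1) * (nuCoeff k * nuCoeff (n - k)) := by
    intro k hk
    have hk : k ≤ n := Nat.lt_succ_iff.mp (mem_range.mp hk)
    rw [show 2 * n + 2 - (2 * k + 1) = 2 * (n - k) + 1 by omega, nuCoeff, nuCoeff, pow_succ,
      pow_mul]
    field_simp
    rw [← pow_add, ← pow_add, show n + 1 + k + (n - k) = 2 * n + 1 by omega, pow_succ, pow_mul]
    norm_num
  rw [sum_congr rfl heven, sum_congr rfl hodd, ← mul_sum, ← mul_sum, ← mul_add] at hsum
  rw [Nat.sum_antidiagonal_eq_sum_range_succ_mk, Nat.sum_antidiagonal_eq_sum_range_succ_mk]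
  simpa using hsum

section PowerSeries

variable {𝕜 A : Type*} [NormedField 𝕜] [NormedRing A] [NormedAlgebra 𝕜 A]

theorem summable_norm_smul_pow_of_norm_le_inv_factorial [NormOneClass A] {c : ℕ → 𝕜}
    (hc : ∀ m, ‖c m‖ ≤ (m.factorial : ℝ)⁻¹) (x : A) : Summable fun m => ‖c m • x ^ m‖ := by
  refine (Real.summable_pow_div_factorial ‖x‖).of_nonneg_of_le (fun _ => norm_nonneg _) fun m => ?_
  calc ‖c m • x ^ m‖ ≤ (m.factorial : ℝ)⁻¹ * ‖x‖ ^ m :=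
        (norm_smul_le _ _).trans (mul_le_mul (hc m) (norm_pow_le x m) (by positivity) (by positivity))
    _ = ‖x‖ ^ m / m.factorial := inv_mul_eq_div _ _

theorem sum_antidiagonal_smul_pow_mul_smul_pow (a b : ℕ → 𝕜) (x : A) (n : ℕ) :
    ∑ kl ∈ antidiagonal n, (a kl.1 • x ^ kl.1) * (b kl.2 • x ^ kl.2)
      = (∑ kl ∈ antidiagonal n, a kl.1 * b kl.2) • x ^ n := by
  rw [sum_smul]
  refine sum_congr rfl fun kl hkl => ?_
  rw [smul_mul_smul, ← pow_add, mem_antidiagonal.mp hkl]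

theorem hasSum_smul_pow_cauchy_product [CompleteSpace A] {a b : ℕ → 𝕜} {x : A}
    (ha : Summable fun m => ‖a m • x ^ m‖) (hb : Summable fun m => ‖b m • x ^ m‖) :
    HasSum (fun n => (∑ kl ∈ antidiagonal n, a kl.1 * b kl.2) • x ^ n)
      ((∑' m, a m • x ^ m) * ∑' m, b m • x ^ m) := by
  simp_rw [← sum_antidiagonal_smul_pow_mul_smul_pow]
  rw [tsum_mul_tsum_eq_tsum_sum_antidiagonal_of_summable_norm ha hb]
  exact (summable_norm_sum_mul_antidiagonal_of_summable_norm ha hb).of_norm.hasSum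

end PowerSeries

theorem norm_neg_one_pow_div_factorial_le {m k : ℕ} (h : m ≤ k) :
    ‖(-1 : ℝ) ^ m / k.factorial‖ ≤ (m.factorial : ℝ)⁻¹ := by
  rw [norm_div, norm_pow, norm_neg, norm_one, one_pow, one_div, Real.norm_natCast]
  exact inv_anti₀ (by positivity) (by exact_mod_cast Nat.factorial_le h)

theorem hasSum_muCoeff_sq (q : ℍ[ℝ]) :
    HasSum (fun n => (∑ kl ∈ antidiagonal n, muCoeff kl.1 * muCoeff kl.2) • q ^ n) (mu q ^ 2) := by
  have hsum : Summable fun m => ‖muCoeff m • q ^ m‖ :=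
    summable_norm_smul_pow_of_norm_le_inv_factorial
      (fun m => norm_neg_one_pow_div_factorial_le (by omega : m ≤ 2 * m)) q
  rw [sq]
  exact hasSum_smul_pow_cauchy_product hsum hsum

theorem hasSum_nuCoeff_sq_mul (q : ℍ[ℝ]) :
    HasSum (fun n => (∑ kl ∈ antidiagonal n, nuCoeff kl.1 * nuCoeff kl.2) • q ^ (n + 1))
      (nu q ^ 2 * q) := by
  have hsum : Summable fun m => ‖nuCoeff m • q ^ m‖ :=
    summable_norm_smul_pow_of_norm_le_inv_factorial
      (fun m => norm_neg_one_pow_div_factorial_le (by omega : m ≤ 2 * m + 1)) q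
  have hprod := (hasSum_smul_pow_cauchy_product hsum hsum).mul_right q
  simp only [smul_mul_assoc, ← pow_succ] at hprod
  rw [sq]
  exact hprod

theorem mu_sq_add_nu_sq_mul (q : ℍ[ℝ]) : mu q ^ 2 + nu q ^ 2 * q = 1 := by
  have hmu := (hasSum_nat_add_iff' 1).mpr (hasSum_muCoeff_sq q)
  have hvanish := hmu.add (hasSum_nuCoeff_sq_mul q)
  simp only [← add_smul, sum_antidiagonal_muCoeff_add_sum_antidiagonal_nuCoeff, zero_smul] at hvanish
  have hconst : mu q ^ 2 - 1 + nu q ^ 2 * q = 0 := by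
    simpa [muCoeff] using hvanish.unique hasSum_zero
  rwa [sub_add_eq_add_sub, sub_eq_zero] at hconst
end

section
/- Let f : ℂ → ℂ be the map f(z) = cos(√z), understood as the entire function f(z) = Σ_{m≥0} (-1)^m z^m/(2m)!. Then f restricted to the region D₀ = { x + iy : x < π² - y²/(4π²) } is a bijection onto ℂ \ (-∞, -1]. -/
/-!
Writing `z = w²`, the parabola `x = π² - y²/(4π²)` is the image of the lines `Re w = ±π`, so
`D₀` is the square of the strip `|Re w| < π`, and `cosSqrt (w²) = cos w`. On that strip `cos`
identifies exactly `w` with `-w`, the same identification the squaring map makes, and by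
periodicity it sends the strip onto the complement of `cos '' {Re w = π} = (-∞, -1]`.
-/

open Complex

/-- The entire function `f(z) = Σ (-1)^m z^m/(2m)!`, i.e. `cos √z`. -/
noncomputable def cosSqrt (z : ℂ) : ℂ :=
  ∑' m : ℕ, ((-1 : ℂ) ^ m / ((2 * m).factorial : ℂ)) * z ^ m

theorem cosSqrt_sq (w : ℂ) : cosSqrt (w ^ 2) = cos w := by
  rw [← (hasSum_cos w).tsum_eq, cosSqrt]
  exact tsum_congr fun m => by rw [← pow_mul]; ring

theorem sq_re_lt_iff {a : ℝ} (ha : 0 < a) (w : ℂ) :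
    (w ^ 2).re < a ^ 2 - (w ^ 2).im ^ 2 / (4 * a ^ 2) ↔ |w.re| < a := by
  have hre : (w ^ 2).re = w.re ^ 2 - w.im ^ 2 := by simp [sq]
  have him : (w ^ 2).im = 2 * w.re * w.im := by simp [sq]; ring
  have hgap : a ^ 2 - (w ^ 2).im ^ 2 / (4 * a ^ 2) - (w ^ 2).re
      = (a ^ 2 - w.re ^ 2) * (1 + w.im ^ 2 / a ^ 2) := by
    rw [hre, him]; field_simp; ring
  rw [← sub_pos, hgap, mul_pos_iff_of_pos_right (by positivity), sub_pos, sq_lt_sq,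
    abs_of_pos ha]

theorem image_sq_setOf_abs_re_lt {a : ℝ} (ha : 0 < a) :
    (· ^ 2) '' {w : ℂ | |w.re| < a} = {z : ℂ | z.re < a ^ 2 - z.im ^ 2 / (4 * a ^ 2)} := by
  ext z
  obtain ⟨w, rfl⟩ := IsAlgClosed.exists_pow_nat_eq z two_pos
  refine ⟨?_, fun hw => ⟨w, (sq_re_lt_iff ha w).1 hw, rfl⟩⟩
  rintro ⟨v, hv, hvw⟩
  rw [Set.mem_ofPred_eq, ← hvw]
  exact (sq_re_lt_iff ha v).2 hv

theorem Int.eq_zero_of_abs_mul_lt {k : ℤ} {a : ℝ} (h : |k * a| < |a|) : k = 0 := by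
  rw [abs_mul] at h
  have ha : 0 < |a| := (mul_nonneg (abs_nonneg _) (abs_nonneg _)).trans_lt h
  have hk : |(k : ℝ)| < 1 := (mul_lt_iff_lt_one_left ha).1 h
  exact Int.abs_lt_one_iff.1 (by exact_mod_cast hk)

theorem eq_or_eq_neg_of_cos_eq_cos {x y : ℂ} (hx : |x.re| < Real.pi) (hy : |y.re| ≤ Real.pi)
    (h : cos x = cos y) : y = x ∨ y = -x := by
  rw [abs_lt] at hx
  rw [abs_le] at hy
  obtain ⟨k, hk | hk⟩ := cos_eq_cos_iff.1 h
  all_goals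
    have hre := congrArg re hk
    simp only [add_re, sub_re, mul_re, ofReal_re, ofReal_im, intCast_re, intCast_im, re_ofNat,
      im_ofNat] at hre
    obtain rfl : k = 0 := Int.eq_zero_of_abs_mul_lt (a := 2 * Real.pi) (by
      rw [abs_of_pos Real.two_pi_pos, abs_lt]; constructor <;> linarith)
    simp only [Int.cast_zero, mul_zero, zero_mul, zero_add, zero_sub] at hk
  · exact .inl hk
  · exact .inr hk

theorem cos_image_re_eq_pi :
    cos '' {w : ℂ | w.re = Real.pi} = {c : ℂ | c.im = 0 ∧ c.re ≤ -1} := by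
  ext c
  constructor
  · rintro ⟨w, hw, rfl⟩
    rw [← re_add_im w, show w.re = Real.pi from hw, add_comm, cos_add_pi, cos_mul_I, ← ofReal_cosh]
    simp [Real.one_le_cosh]
  · rintro ⟨him, hre⟩
    refine ⟨Real.arcosh (-c.re) * I + Real.pi, by simp, ?_⟩
    rw [cos_add_pi, cos_mul_I, ← ofReal_cosh, Real.cosh_arcosh (by linarith)]
    apply Complex.ext <;> simp [him]

theorem cos_image_abs_re_lt_pi :
    cos '' {w : ℂ | |w.re| < Real.pi} = {c : ℂ | c.im = 0 ∧ c.re ≤ -1}ᶜ := by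
  ext c
  constructor
  · rintro ⟨w, hw, rfl⟩ hslit
    rw [← cos_image_re_eq_pi] at hslit
    obtain ⟨y, hy, hcos⟩ := hslit
    have hy' : |y.re| = Real.pi := by rw [show y.re = Real.pi from hy, abs_of_pos Real.pi_pos]
    have habs : |y.re| = |w.re| := by
      rcases eq_or_eq_neg_of_cos_eq_cos hw hy'.le hcos.symm with rfl | rfl <;> simp
    exact (show |w.re| < Real.pi from hw).ne (habs ▸ hy')
  · intro hc
    obtain ⟨w, rfl⟩ := cos_surjective c
    set n := toIocDiv Real.two_pi_pos (-Real.pi) w.re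
    have hre : (w - n * (2 * Real.pi)).re = toIocMod Real.two_pi_pos (-Real.pi) w.re := by
      rw [← self_sub_toIocDiv_zsmul]; simp [n]
    have hmem := toIocMod_mem_Ioc Real.two_pi_pos (-Real.pi) w.re
    rw [← hre] at hmem
    refine ⟨w - n * (2 * Real.pi), abs_lt.2 ⟨hmem.1, lt_of_le_of_ne (by linarith [hmem.2]) ?_⟩,
      cos_sub_int_mul_two_pi w n⟩
    intro hπ
    exact hc (cos_image_re_eq_pi ▸ ⟨_, hπ, cos_sub_int_mul_two_pi w n⟩)

theorem cosSqrt_bijOn :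
    Set.BijOn cosSqrt
      {z : ℂ | z.re < Real.pi ^ 2 - z.im ^ 2 / (4 * Real.pi ^ 2)}
      ({w : ℂ | w.im = 0 ∧ w.re ≤ -1}ᶜ) := by
  rw [← image_sq_setOf_abs_re_lt Real.pi_pos, ← cos_image_abs_re_lt_pi]
  refine ⟨?_, ?_, ?_⟩
  · rintro _ ⟨w, hw, rfl⟩
    exact ⟨w, hw, (cosSqrt_sq w).symm⟩
  · rintro _ ⟨w₁, hw₁, rfl⟩ _ ⟨w₂, hw₂, rfl⟩ h
    rw [cosSqrt_sq, cosSqrt_sq] at h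
    rcases eq_or_eq_neg_of_cos_eq_cos hw₁ hw₂.le h with rfl | rfl <;> simp
  · rintro _ ⟨w, hw, rfl⟩
    exact ⟨w ^ 2, ⟨w, hw, rfl⟩, cosSqrt_sq w⟩
end

section
/- The squaring map z ↦ z² is a bijection from the strip {x + iy ∈ ℂ : 0 < x < π} onto D₀ \ (-∞, 0], where D₀ = { x + iy : x < π² - y²/(4π²) }. -/
/-!
Squaring maps the right half-plane bijectively onto the slit plane, with inverse
`w ↦ exp (log w / 2)`. For `z = x + iy` with `x > 0`, the square `z²` lies to the left of the
parabola `u = a² - v² / (4a²)` (the image of the line `Re z = a`) exactly when `x < a`, because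
the horizontal gap factors as `(a² - x²) (1 + y² / a²)`. Taking `a = π` cuts the strip out of
the half-plane and `D₀` out of the slit plane.
-/

open Complex

namespace Complex

lemma sq_re (z : ℂ) : (z ^ 2).re = z.re ^ 2 - z.im ^ 2 := by
  simp [pow_two]

lemma sq_im (z : ℂ) : (z ^ 2).im = 2 * z.re * z.im := by
  simp [pow_two]; ring

lemma compl_setOf_im_eq_zero_and_re_nonpos : {w : ℂ | w.im = 0 ∧ w.re ≤ 0}ᶜ = slitPlane := by
  ext w
  rw [Set.mem_compl_iff, Set.mem_ofPred_eq, mem_slitPlane_iff, not_and_or, not_le, or_comm]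

lemma re_exp_log_div_two_pos {w : ℂ} (hw : w ∈ slitPlane) : 0 < (exp (log w / 2)).re := by
  have harg : |arg w| < Real.pi :=
    abs_lt.mpr ⟨neg_pi_lt_arg w, (arg_le_pi w).lt_of_ne (slitPlane_arg_ne_pi hw)⟩
  rw [exp_re]
  refine mul_pos (Real.exp_pos _) (Real.cos_pos_of_mem_Ioo ?_)
  simp only [div_ofNat_im, log_im]
  constructor <;> linarith [abs_lt.mp harg]

theorem sq_bijOn_re_pos_slitPlane : Set.BijOn (· ^ 2) {z : ℂ | 0 < z.re} slitPlane := by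
  refine ⟨fun z (hz : 0 < z.re) => ?_, fun z₁ (h₁ : 0 < z₁.re) z₂ (h₂ : 0 < z₂.re) hsq => ?_,
    fun w hw => ?_⟩
  · rw [mem_slitPlane_iff, sq_re, sq_im]
    rcases eq_or_ne z.im 0 with him | him
    · exact .inl (by rw [him, zero_pow two_ne_zero, sub_zero]; positivity)
    · exact .inr (mul_ne_zero (mul_ne_zero two_ne_zero hz.ne') him)
  · rcases sq_eq_sq_iff_eq_or_eq_neg.mp hsq with heq | hneg
    · exact heq
    · have hre := congrArg re hneg
      rw [neg_re] at hre
      linarith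
  · refine ⟨exp (log w / 2), re_exp_log_div_two_pos hw, ?_⟩
    dsimp only
    rw [sq, ← exp_add, add_halves, exp_log (slitPlane_ne_zero hw)]

lemma re_sq_lt_parabola_iff {a : ℝ} (ha : 0 < a) {z : ℂ} (hz : 0 < z.re) :
    (z ^ 2).re < a ^ 2 - (z ^ 2).im ^ 2 / (4 * a ^ 2) ↔ z.re < a := by
  have hfactor : a ^ 2 - (2 * z.re * z.im) ^ 2 / (4 * a ^ 2) - (z.re ^ 2 - z.im ^ 2)
      = (a ^ 2 - z.re ^ 2) * (1 + z.im ^ 2 / a ^ 2) := by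
    field_simp; ring
  rw [sq_re, sq_im, ← sub_pos, hfactor, mul_pos_iff_of_pos_right (by positivity), sub_pos,
    pow_lt_pow_iff_left₀ hz.le ha.le two_ne_zero]

end Complex

theorem sq_bijOn_strip :
    Set.BijOn (fun z : ℂ => z ^ 2)
      {z : ℂ | 0 < z.re ∧ z.re < Real.pi}
      ({z : ℂ | z.re < Real.pi ^ 2 - z.im ^ 2 / (4 * Real.pi ^ 2)} \
        {w : ℂ | w.im = 0 ∧ w.re ≤ 0}) := by
  have hstrip : {z : ℂ | 0 < z.re ∧ z.re < Real.pi} ⊆ {z : ℂ | 0 < z.re} := fun _ hz => hz.1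
  rw [Set.sdiff_eq, compl_setOf_im_eq_zero_and_re_nonpos, ← Set.inter_eq_left.mpr hstrip]
  refine Set.MapsTo.inter_bijOn (fun z ⟨hz, hzπ⟩ => ?_) sq_bijOn_re_pos_slitPlane
    fun z ⟨hz, hz2⟩ => ⟨hz, ?_⟩
  · exact (re_sq_lt_parabola_iff Real.pi_pos hz).mpr hzπ
  · exact (re_sq_lt_parabola_iff Real.pi_pos hz).mp hz2
end

section
/- Let U ⊆ ℂ be a connected open set, and let a₀, a₁ : U → ℂ be holomorphic functions with a₀² + a₁² ≡ 1. If U is simply connected, then there exists a holomorphic γ : U → ℂ with cos(γ) = a₀ and sin(γ) = a₁. -/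
/-!
With `f := a₀ + a₁ i`, the identity `a₀² + a₁² = 1` says `f (a₀ - a₁ i) = 1`, so `f` has no zeros.
Since `exp : ℂ → ℂ \ {0}` is a covering map, the lifting criterion lifts `f` on the simply
connected set `U` to a continuous `G` with `exp ∘ G = f`, and `G` is holomorphic because locally it
is a branch of `log` composed with `f`. Then `γ := -i G` satisfies `exp (i γ) = a₀ + a₁ i` and
`exp (-i γ) = a₀ - a₁ i`, which gives `cos γ = a₀` and `sin γ = a₁`.
-/

open Complex Filter Topology

theorem differentiableAt_of_hasStrictFDerivAt_comp {𝕜 G E F : Type*}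
    [NontriviallyNormedField 𝕜] [NormedAddCommGroup G] [NormedSpace 𝕜 G]
    [NormedAddCommGroup E] [NormedSpace 𝕜 E] [CompleteSpace E]
    [NormedAddCommGroup F] [NormedSpace 𝕜 F]
    {φ : E → F} {φ' : E ≃L[𝕜] F} {f : G → F} {g : G → E} {z : G}
    (hφ : HasStrictFDerivAt φ (φ' : E →L[𝕜] F) (g z)) (hg : ContinuousAt g z)
    (hf : DifferentiableAt 𝕜 f z) (hφg : ∀ᶠ w in 𝓝 z, φ (g w) = f w) :
    DifferentiableAt 𝕜 g z := by
  set ψ := hφ.localInverse φ φ' (g z)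
  have hψf : ψ ∘ f =ᶠ[𝓝 z] g := by
    filter_upwards [hg.eventually hφ.eventually_left_inverse, hφg] with w hw hφw
    rw [hφw] at hw
    exact hw
  have hψ : DifferentiableAt 𝕜 ψ (f z) :=
    hφg.self_of_nhds ▸ hφ.to_localInverse.differentiableAt
  exact (hψ.comp z hf).congr_of_eventuallyEq hψf.symm

theorem exists_continuous_exp_comp_eq {A : Type*} [TopologicalSpace A] [SimplyConnectedSpace A]
    [LocallyPathConnectedSpace A] {f : A → ℂ} (hf : Continuous f) (hne : ∀ a, f a ≠ 0) :
    ∃ g : A → ℂ, Continuous g ∧ ∀ a, exp (g a) = f a := by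
  obtain ⟨a₀⟩ : Nonempty A := inferInstance
  obtain ⟨g, ⟨-, hg⟩, -⟩ :=
    isCoveringMapOn_exp.existsUnique_continuousMap_lifts ⟨f, hf⟩ (exp_log (hne a₀)) hne
  exact ⟨g, g.continuous, congrFun hg⟩

theorem exists_differentiableOn_exp_comp_eq {U : Set ℂ} (hU : IsOpen U) [SimplyConnectedSpace U]
    {f : ℂ → ℂ} (hf : DifferentiableOn ℂ f U) (hne : ∀ z ∈ U, f z ≠ 0) :
    ∃ g : ℂ → ℂ, DifferentiableOn ℂ g U ∧ ∀ z ∈ U, exp (g z) = f z := by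
  have := hU.locallyPathConnectedSpace
  obtain ⟨g, hgc, hg⟩ :=
    exists_continuous_exp_comp_eq hf.continuousOn.domRestrict fun z : U ↦ hne z z.2
  classical
  set G : ℂ → ℂ := fun z ↦ if hz : z ∈ U then g ⟨z, hz⟩ else 0
  have hGg (z : ℂ) (hz : z ∈ U) : G z = g ⟨z, hz⟩ := dif_pos hz
  have hexpG (z : ℂ) (hz : z ∈ U) : exp (G z) = f z := hGg z hz ▸ hg ⟨z, hz⟩
  have hGc : ContinuousOn G U := by
    rw [continuousOn_iff_continuous_domRestrict]
    convert hgc using 1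
    ext z
    exact hGg z z.2
  refine ⟨G, fun z hz ↦ ?_, hexpG⟩
  have hexp := (hasStrictDerivAt_exp (G z)).hasStrictFDerivAt_equiv (exp_ne_zero _)
  refine (differentiableAt_of_hasStrictFDerivAt_comp hexp (hGc.continuousAt (hU.mem_nhds hz))
    (hf.differentiableAt (hU.mem_nhds hz)) ?_).differentiableWithinAt
  filter_upwards [hU.mem_nhds hz] with w hw using hexpG w hw

theorem add_mul_I_mul_sub_mul_I (a b : ℂ) : (a + b * I) * (a - b * I) = a ^ 2 + b ^ 2 := by
  linear_combination -b ^ 2 * I_sq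

theorem cos_eq_and_sin_eq_of_exp_mul_I_eq {w a b : ℂ} (hab : a ^ 2 + b ^ 2 = 1)
    (hw : exp (w * I) = a + b * I) : cos w = a ∧ sin w = b := by
  have hadd : cos w + sin w * I = a + b * I := by rw [cos_add_sin_I, hw]
  have hsub : cos w - sin w * I = a - b * I := by
    rw [cos_sub_sin_I, neg_mul, exp_neg, hw]
    exact inv_eq_of_mul_eq_one_right ((add_mul_I_mul_sub_mul_I a b).trans hab)
  refine ⟨by linear_combination (hadd + hsub) / 2, ?_⟩
  linear_combination (I * hsub - I * hadd) / 2 + (sin w - b) * I_sq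

theorem exists_holomorphic_cos_sin_general (U : Set ℂ) (hU : IsOpen U)
    (hUs : SimplyConnectedSpace U)
    (a₀ a₁ : ℂ → ℂ) (h₀ : DifferentiableOn ℂ a₀ U) (h₁ : DifferentiableOn ℂ a₁ U)
    (hsum : ∀ z ∈ U, a₀ z ^ 2 + a₁ z ^ 2 = 1) :
    ∃ γ : ℂ → ℂ, DifferentiableOn ℂ γ U ∧
      ∀ z ∈ U, Complex.cos (γ z) = a₀ z ∧ Complex.sin (γ z) = a₁ z := by
  have hne : ∀ z ∈ U, a₀ z + a₁ z * I ≠ 0 := fun z hz ↦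
    left_ne_zero_of_mul_eq_one ((add_mul_I_mul_sub_mul_I _ _).trans (hsum z hz))
  obtain ⟨G, hG, hexpG⟩ := exists_differentiableOn_exp_comp_eq hU (h₀.add (h₁.mul_const I)) hne
  refine ⟨fun z ↦ -I * G z, (differentiableOn_const _).mul hG, fun z hz ↦ ?_⟩
  refine cos_eq_and_sin_eq_of_exp_mul_I_eq (hsum z hz) ?_
  rw [show -I * G z * I = G z by linear_combination -G z * I_sq]
  exact hexpG z hz

theorem exists_holomorphic_cos_sin (U : Set ℂ) (hU : IsOpen U) (hUc : IsConnected U)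
    (hUs : SimplyConnectedSpace U)
    (a₀ a₁ : ℂ → ℂ) (h₀ : DifferentiableOn ℂ a₀ U) (h₁ : DifferentiableOn ℂ a₁ U)
    (hsum : ∀ z ∈ U, a₀ z ^ 2 + a₁ z ^ 2 = 1) :
    ∃ γ : ℂ → ℂ, DifferentiableOn ℂ γ U ∧
      ∀ z ∈ U, Complex.cos (γ z) = a₀ z ∧ Complex.sin (γ z) = a₁ z :=
  exists_holomorphic_cos_sin_general U hU hUs a₀ a₁ h₀ h₁ hsum
end

section
/- Let h : ℂ → ℂ be entire with h(z) = Σ (-1)^m z^m/(2m+1)! (so h(z²)·z = sin z). Then h(z) = 0 if and only if z = π²n² for some nonzero integer n. -/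
open Complex

/-- The entire function `h(z) = Σ (-1)^m z^m/(2m+1)!`, so that `h(z²)·z = sin z`. -/
noncomputable def sinDiv (z : ℂ) : ℂ :=
  ∑' m : ℕ, ((-1 : ℂ) ^ m / ((2 * m + 1).factorial : ℂ)) * z ^ m

/-! Since `h(w²)·w = sin w` and every complex number is a square, the zeros of `h` are the
squares of the nonzero zeros `nπ` of `sin`. -/

lemma sinDiv_sq_mul (w : ℂ) : sinDiv (w ^ 2) * w = sin w := by
  rw [sinDiv, ← tsum_mul_right, sin_eq_tsum]
  congr 1 with m
  rw [← pow_mul]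
  ring

lemma sinDiv_zero : sinDiv 0 = 1 := by
  rw [sinDiv, tsum_eq_single 0 fun m hm => by simp [zero_pow hm]]
  simp

lemma sinDiv_sq_eq_zero_iff (w : ℂ) : sinDiv (w ^ 2) = 0 ↔ w ≠ 0 ∧ sin w = 0 := by
  constructor
  · intro h
    refine ⟨?_, by rw [← sinDiv_sq_mul, h, zero_mul]⟩
    rintro rfl
    simp [sinDiv_zero] at h
  · rintro ⟨hw, hsin⟩
    rw [← sinDiv_sq_mul] at hsin
    exact (mul_eq_zero.1 hsin).resolve_right hw

theorem sinDiv_eq_zero_iff (z : ℂ) :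
    sinDiv z = 0 ↔ ∃ n : ℤ, n ≠ 0 ∧ z = ((Real.pi : ℂ) ^ 2 * (n : ℂ) ^ 2) := by
  constructor
  · intro h
    obtain ⟨w, rfl⟩ := IsAlgClosed.exists_pow_nat_eq z two_pos
    obtain ⟨hw, k, rfl⟩ := ((sinDiv_sq_eq_zero_iff w).1 h).imp_right sin_eq_zero_iff.1
    exact ⟨k, by rintro rfl; simp at hw, by ring⟩
  · rintro ⟨n, hn, rfl⟩
    rw [show (Real.pi : ℂ) ^ 2 * n ^ 2 = (n * Real.pi) ^ 2 by ring, sinDiv_sq_eq_zero_iff]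
    exact ⟨mul_ne_zero (Int.cast_ne_zero.2 hn) (ofReal_ne_zero.2 Real.pi_ne_zero),
      sin_int_mul_pi n⟩
end
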